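/- arXiv:1205.1348 — 4 statements merged into one kernel-verified Lean document; each statement's English description precedes it below -/
import Mathlib

section
/- Let S̄ = K[a,b,x_1,y_1,…,x_n,y_n], let n̄ be its graded maximal ideal, and let Ī ⊂ S̄ be the monomial ideal generated by a^6, a^5b, ab^5, b^6, and a^4x_iy_i^2, b^4x_i^2y_i for i = 1,…,n. Then for every integer k ≥ 2, the monomial w = a^5 b^{6k−6} x_1 y_1 x_2 y_2 ⋯ x_n y_n satisfies w ∈ Ī^k : n̄, i.e., w·n̄ ⊆ Ī^k. -/
open MvPolynomial

noncomputable section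

/-- The type of the variables `a, b, x₁, y₁, …, xₙ, yₙ` of the polynomial ring `S̄`. -/
abbrev VarsB (n : ℕ) : Type := Fin 2 ⊕ Fin n ⊕ Fin n

variable (K : Type*) [Field K] (n : ℕ)

/-- The variable `a` of `S̄`. -/
def ba : MvPolynomial (VarsB n) K := X (Sum.inl 0)
/-- The variable `b` of `S̄`. -/
def bb : MvPolynomial (VarsB n) K := X (Sum.inl 1)
/-- The variable `xᵢ` of `S̄`. -/
def bx (i : Fin n) : MvPolynomial (VarsB n) K := X (Sum.inr (Sum.inl i))
/-- The variable `yᵢ` of `S̄`. -/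
def by' (i : Fin n) : MvPolynomial (VarsB n) K := X (Sum.inr (Sum.inr i))

/-- The monomial ideal `Ī = (a⁶, a⁵b, ab⁵, b⁶, a⁴x₁y₁², b⁴x₁²y₁, …, a⁴xₙyₙ², b⁴xₙ²yₙ) ⊆ S̄`. -/
def idealIbar : Ideal (MvPolynomial (VarsB n) K) :=
  Ideal.span
    ({ba K n ^ 6, ba K n ^ 5 * bb K n, ba K n * bb K n ^ 5, bb K n ^ 6} ∪
     Set.range (fun i => ba K n ^ 4 * bx K n i * by' K n i ^ 2) ∪
     Set.range (fun i => bb K n ^ 4 * bx K n i ^ 2 * by' K n i))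

/-- The graded maximal ideal `n̄` of `S̄`. -/
def nBar : Ideal (MvPolynomial (VarsB n) K) := Ideal.span (Set.range X)

/-- The monomial `w = a⁵ b^{6k-6} x₁y₁x₂y₂ ⋯ xₙyₙ` of `S̄`. -/
def wMon (k : ℕ) : MvPolynomial (VarsB n) K :=
  ba K n ^ 5 * bb K n ^ (6 * k - 6) * ∏ i : Fin n, (bx K n i * by' K n i)


lemma mem_a6 : ba K n ^ 6 ∈ idealIbar K n :=
  Ideal.subset_span (by left; left; simp)
lemma mem_a5b : ba K n ^ 5 * bb K n ∈ idealIbar K n :=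
  Ideal.subset_span (by left; left; simp)
lemma mem_ab5 : ba K n * bb K n ^ 5 ∈ idealIbar K n :=
  Ideal.subset_span (by left; left; simp)
lemma mem_b6 : bb K n ^ 6 ∈ idealIbar K n :=
  Ideal.subset_span (by left; left; simp)
lemma mem_gx (j : Fin n) : ba K n ^ 4 * bx K n j * by' K n j ^ 2 ∈ idealIbar K n :=
  Ideal.subset_span (by left; right; exact ⟨j, rfl⟩)
lemma mem_gy (j : Fin n) : bb K n ^ 4 * bx K n j ^ 2 * by' K n j ∈ idealIbar K n :=
  Ideal.subset_span (by right; exact ⟨j, rfl⟩)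

lemma aux2 {R : Type*} [CommRing R] (I : Ideal R) (g1 g : R) (h1 : g1 ∈ I) (hg : g ∈ I)
    (c : R) (m : ℕ) : c * (g1 * g ^ (m + 1)) ∈ I ^ (m + 2) := by
  apply Ideal.mul_mem_left
  have : I ^ (m + 2) = I * I ^ (m + 1) := by ring
  rw [this]
  exact Ideal.mul_mem_mul h1 (Ideal.pow_mem_pow hg (m + 1))

lemma aux3 {R : Type*} [CommRing R] (I : Ideal R) (g1 g2 g : R) (h1 : g1 ∈ I) (h2 : g2 ∈ I)
    (hg : g ∈ I) (c : R) (m : ℕ) : c * (g1 * (g2 * g ^ m)) ∈ I ^ (m + 2) := by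
  apply Ideal.mul_mem_left
  have : I ^ (m + 2) = I * (I * I ^ m) := by ring
  rw [this]
  exact Ideal.mul_mem_mul h1 (Ideal.mul_mem_mul h2 (Ideal.pow_mem_pow hg m))

/-- For every `k ≥ 2`, the monomial `w = a⁵b^{6k-6}x₁y₁ ⋯ xₙyₙ` satisfies
`w ∈ Īᵏ : n̄`, i.e. `w ⬝ n̄ ⊆ Īᵏ`. -/
theorem w_mem_colon (k : ℕ) (hk : 2 ≤ k) :
    wMon K n k ∈ ((idealIbar K n) ^ k).colon (nBar K n) := by
  obtain ⟨m, rfl⟩ : ∃ m, k = m + 2 := ⟨k - 2, by omega⟩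
  have hw : wMon K n (m + 2)
      = ba K n ^ 5 * bb K n ^ (6 * m + 6) * ∏ i : Fin n, (bx K n i * by' K n i) := by
    have h6 : 6 * (m + 2) - 6 = 6 * m + 6 := by omega
    rw [wMon, h6]
  rw [Submodule.mem_colon]
  intro p hp
  rw [nBar] at hp
  induction hp using Submodule.span_induction with
  | mem x hx =>
    obtain ⟨v, rfl⟩ := hx
    rw [smul_eq_mul]
    obtain (i | j | j) := v
    · fin_cases i
      · -- a
        show wMon K n (m + 2) * X (Sum.inl 0 : VarsB n) ∈ _
        have : wMon K n (m + 2) * X (Sum.inl 0 : VarsB n)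
            = (∏ i : Fin n, (bx K n i * by' K n i)) *
              (ba K n ^ 6 * (bb K n ^ 6) ^ (m + 1)) := by
          rw [hw, ba, bb]; ring
        rw [this]
        exact aux2 _ _ _ (mem_a6 K n) (mem_b6 K n) _ m
      · -- b
        show wMon K n (m + 2) * X (Sum.inl 1 : VarsB n) ∈ _
        have : wMon K n (m + 2) * X (Sum.inl 1 : VarsB n)
            = (∏ i : Fin n, (bx K n i * by' K n i)) *
              ((ba K n ^ 5 * bb K n) * (bb K n ^ 6) ^ (m + 1)) := by
          rw [hw, ba, bb]; ring
        rw [this]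
        exact aux2 _ _ _ (mem_a5b K n) (mem_b6 K n) _ m
    · -- x_j
      have hsplit : (∏ i : Fin n, (bx K n i * by' K n i))
          = bx K n j * by' K n j * ∏ i ∈ Finset.univ.erase j, (bx K n i * by' K n i) :=
        (Finset.mul_prod_erase Finset.univ (fun i => bx K n i * by' K n i)
          (Finset.mem_univ j)).symm
      have : wMon K n (m + 2) * X (Sum.inr (Sum.inl j) : VarsB n)
          = (bb K n * ∏ i ∈ Finset.univ.erase j, (bx K n i * by' K n i)) *
            ((bb K n ^ 4 * bx K n j ^ 2 * by' K n j) *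
              ((ba K n ^ 5 * bb K n) * (bb K n ^ 6) ^ m)) := by
        rw [hw, hsplit, bx, by', ba, bb]; ring
      rw [this]
      exact aux3 _ _ _ _ (mem_gy K n j) (mem_a5b K n) (mem_b6 K n) _ m
    · -- y_j
      have hsplit : (∏ i : Fin n, (bx K n i * by' K n i))
          = bx K n j * by' K n j * ∏ i ∈ Finset.univ.erase j, (bx K n i * by' K n i) :=
        (Finset.mul_prod_erase Finset.univ (fun i => bx K n i * by' K n i)
          (Finset.mem_univ j)).symm
      have : wMon K n (m + 2) * X (Sum.inr (Sum.inr j) : VarsB n)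
          = (bb K n * ∏ i ∈ Finset.univ.erase j, (bx K n i * by' K n i)) *
            ((ba K n ^ 4 * bx K n j * by' K n j ^ 2) *
              ((ba K n * bb K n ^ 5) * (bb K n ^ 6) ^ m)) := by
        rw [hw, hsplit, bx, by', ba, bb]; ring
      rw [this]
      exact aux3 _ _ _ _ (mem_gx K n j) (mem_ab5 K n) (mem_b6 K n) _ m
  | zero => simp
  | add x y _ _ hx hy => rw [smul_add]; exact add_mem hx hy
  | smul c x _ hx => rw [smul_comm]; exact Submodule.smul_mem _ _ hx
end
end

section
/- Let S̄ = K[a,b,x_1,y_1,…,x_n,y_n] and let Ī ⊂ S̄ be the monomial ideal generated by a^6, a^5b, ab^5, b^6, and a^4x_iy_i^2, b^4x_i^2y_i for i = 1,…,n. Then for every integer k ≥ 2, the monomial w = a^5 b^{6k−6} x_1 y_1 x_2 y_2 ⋯ x_n y_n does not belong to Ī^k. -/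
open MvPolynomial Pointwise

noncomputable section

variable (K : Type*) [Field K] (n : ℕ)

/-! ### Auxiliary material for the proof -/

/-- The set of exponent vectors of the generators of `Ī`. -/
def Eset : Set (VarsB n →₀ ℕ) :=
  ({Finsupp.single (Sum.inl 0) 6,
    Finsupp.single (Sum.inl 0) 5 + Finsupp.single (Sum.inl 1) 1,
    Finsupp.single (Sum.inl 0) 1 + Finsupp.single (Sum.inl 1) 5,
    Finsupp.single (Sum.inl 1) 6} : Set (VarsB n →₀ ℕ)) ∪
  Set.range (fun i : Fin n =>
    Finsupp.single (Sum.inl 0) 4 + Finsupp.single (Sum.inr (Sum.inl i)) 1 +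
      Finsupp.single (Sum.inr (Sum.inr i)) 2) ∪
  Set.range (fun i : Fin n =>
    Finsupp.single (Sum.inl 1) 4 + Finsupp.single (Sum.inr (Sum.inl i)) 2 +
      Finsupp.single (Sum.inr (Sum.inr i)) 1)

lemma monomial_prod_aux {σ : Type*} {ι : Type*} (s : Finset ι) (g : ι → (σ →₀ ℕ)) :
    (∏ i ∈ s, monomial (g i) (1 : K)) = monomial (∑ i ∈ s, g i) (1 : K) := by
  classical
  induction s using Finset.induction with
  | empty => simp
  | insert _ _ h ih =>
      rw [Finset.prod_insert h, Finset.sum_insert h, ih, monomial_mul, one_mul]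

lemma idealIbar_eq : idealIbar K n = Ideal.span ((fun s => monomial s (1 : K)) '' Eset n) := by
  unfold idealIbar Eset
  congr 1
  rw [Set.image_union, Set.image_union, Set.image_insert_eq, Set.image_insert_eq,
    Set.image_insert_eq, Set.image_singleton, ← Set.range_comp, ← Set.range_comp]
  congr 1
  · congr 1
    · simp only [ba, bb, X, monomial_mul, monomial_pow, mul_one, one_mul, one_pow,
        Finsupp.smul_single, smul_eq_mul]
    · ext p
      simp only [Set.mem_range, Function.comp, ba, bx, by', X, monomial_mul, monomial_pow,
        mul_one, one_mul, one_pow, Finsupp.smul_single, smul_eq_mul]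
  · ext p
    simp only [Set.mem_range, Function.comp, bb, bx, by', X, monomial_mul, monomial_pow,
      mul_one, one_mul, one_pow, Finsupp.smul_single, smul_eq_mul]

/-- The set of exponent vectors of products of `k` generators. -/
def Tset (k : ℕ) : Set (VarsB n →₀ ℕ) :=
  {d | ∃ f : Fin k → (VarsB n →₀ ℕ), (∀ j, f j ∈ Eset n) ∧ (∑ j, f j) = d}

lemma pow_le_span_Tset (k : ℕ) :
    (idealIbar K n) ^ k ≤ Ideal.span ((fun s => monomial s (1 : K)) '' Tset n k) := by
  induction k with
  | zero =>
      rw [pow_zero, Ideal.one_eq_top, top_le_iff, Ideal.eq_top_iff_one]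
      refine Ideal.subset_span ?_
      refine ⟨0, ⟨fun j => j.elim0, fun j => j.elim0, by simp⟩, by simp⟩
  | succ k ih =>
      rw [pow_succ']
      calc idealIbar K n * idealIbar K n ^ k
          ≤ Ideal.span ((fun s => monomial s (1 : K)) '' Eset n) *
              Ideal.span ((fun s => monomial s (1 : K)) '' Tset n k) := by
            exact Ideal.mul_mono (le_of_eq (idealIbar_eq K n)) ih
        _ = Ideal.span (((fun s => monomial s (1 : K)) '' Eset n) *
              ((fun s => monomial s (1 : K)) '' Tset n k)) := by
            rw [Ideal.span_mul_span']
        _ ≤ Ideal.span ((fun s => monomial s (1 : K)) '' Tset n (k + 1)) := by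
            refine Ideal.span_mono ?_
            rintro z hz
            rw [Set.mem_mul] at hz
            obtain ⟨p, ⟨e, he, rfl⟩, q, ⟨t, ⟨f, hf, rfl⟩, rfl⟩, rfl⟩ := hz
            refine ⟨e + ∑ j, f j, ⟨Fin.cons e f, ?_, ?_⟩, ?_⟩
            · intro j
              refine Fin.cases ?_ ?_ j
              · simpa using he
              · intro i; simpa using hf i
            · rw [Fin.sum_cons]
            · simp [monomial_mul]

/-- The exponent vector of `w`. -/
def Dexp (k : ℕ) : VarsB n →₀ ℕ :=
  Finsupp.single (Sum.inl 0) 5 + Finsupp.single (Sum.inl 1) (6 * k - 6) +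
    ∑ i : Fin n, (Finsupp.single (Sum.inr (Sum.inl i)) 1 +
      Finsupp.single (Sum.inr (Sum.inr i)) (1 : ℕ))

lemma wMon_eq (k : ℕ) : wMon K n k = monomial (Dexp n k) (1 : K) := by
  unfold wMon Dexp ba bb bx by'
  have : (∏ i : Fin n, (X (Sum.inr (Sum.inl i)) * X (Sum.inr (Sum.inr i)) :
      MvPolynomial (VarsB n) K)) =
      monomial (∑ i : Fin n, (Finsupp.single (Sum.inr (Sum.inl i)) 1 +
        Finsupp.single (Sum.inr (Sum.inr i)) (1 : ℕ))) (1 : K) := by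
    rw [← monomial_prod_aux]
    refine Finset.prod_congr rfl fun i _ => ?_
    rw [X, X, monomial_mul, one_mul]
  rw [this, X_pow_eq_monomial, X_pow_eq_monomial, monomial_mul, monomial_mul, one_mul, one_mul]

lemma Dexp_a (k : ℕ) : Dexp n k (Sum.inl 0) = 5 := by
  simp [Dexp, Finsupp.single_apply]

lemma Dexp_b (k : ℕ) : Dexp n k (Sum.inl 1) = 6 * k - 6 := by
  simp [Dexp, Finsupp.single_apply]

lemma Dexp_x (k : ℕ) (i : Fin n) : Dexp n k (Sum.inr (Sum.inl i)) = 1 := by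
  simp [Dexp, Finsupp.single_apply, Finsupp.finset_sum_apply]

lemma Dexp_y (k : ℕ) (i : Fin n) : Dexp n k (Sum.inr (Sum.inr i)) = 1 := by
  simp [Dexp, Finsupp.single_apply, Finsupp.finset_sum_apply]

/-- For every `k ≥ 2`, the monomial `w = a⁵b^{6k-6}x₁y₁ ⋯ xₙyₙ` does not belong to `Īᵏ`. -/
theorem w_not_mem_pow (k : ℕ) (hk : 2 ≤ k) :
    wMon K n k ∉ ((idealIbar K n) ^ k : Ideal (MvPolynomial (VarsB n) K)) := by
  intro hw
  have hw' := pow_le_span_Tset K n k hw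
  rw [wMon_eq, mem_ideal_span_monomial_image] at hw'
  have hD : Dexp n k ∈ (monomial (Dexp n k) (1 : K)).support := by
    rw [mem_support_iff, coeff_monomial, if_pos rfl]
    exact one_ne_zero
  obtain ⟨t, ⟨f, hf, rfl⟩, hle⟩ := hw' _ hD
  -- pointwise bound on each generator in the product
  have hbound : ∀ (j : Fin k) (v : VarsB n), f j v ≤ Dexp n k v := by
    intro j v
    calc f j v ≤ ∑ j', f j' v :=
          Finset.single_le_sum (f := fun j' => f j' v) (fun j' _ => Nat.zero_le _) (Finset.mem_univ j)
      _ = (∑ j', f j') v := (Finsupp.finset_sum_apply _ _ _).symm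
      _ ≤ Dexp n k v := hle v
  -- each factor must be one of the four pure generators, with a-degree + b-degree = 6
  have key : ∀ j : Fin k, f j (Sum.inl 0) + f j (Sum.inl 1) = 6 := by
    intro j
    have hmem := hf j
    simp only [Eset, Set.mem_union, Set.mem_insert_iff, Set.mem_singleton_iff,
      Set.mem_range] at hmem
    rcases hmem with ((h | h | h | h) | ⟨i, hi⟩) | ⟨i, hi⟩
    · rw [h]; simp [Finsupp.single_apply]
    · rw [h]; simp [Finsupp.single_apply]
    · rw [h]; simp [Finsupp.single_apply]
    · rw [h]; simp [Finsupp.single_apply]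
    · exfalso
      have := hbound j (Sum.inr (Sum.inr i))
      rw [← hi, Dexp_y] at this
      simp [Finsupp.single_apply] at this
    · exfalso
      have := hbound j (Sum.inr (Sum.inl i))
      rw [← hi, Dexp_x] at this
      simp [Finsupp.single_apply] at this
  -- sum up the a- and b-degrees
  have ha : (∑ j, f j) (Sum.inl 0) ≤ 5 := by
    have := hle (Sum.inl 0); rwa [Dexp_a] at this
  have hb : (∑ j, f j) (Sum.inl 1) ≤ 6 * k - 6 := by
    have := hle (Sum.inl 1); rwa [Dexp_b] at this
  rw [Finsupp.finset_sum_apply] at ha hb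
  have htot : ∑ j : Fin k, (f j (Sum.inl 0) + f j (Sum.inl 1)) = 6 * k := by
    rw [Finset.sum_congr rfl fun j _ => key j]
    simp [mul_comm]
  rw [Finset.sum_add_distrib] at htot
  omega
end
end

section
/- Let S̄ = K[a,b,x_1,y_1,…,x_n,y_n], let n̄ be its graded maximal ideal, and let Ī ⊂ S̄ be the monomial ideal generated by a^6, a^5b, ab^5, b^6, and a^4x_iy_i^2, b^4x_i^2y_i for i = 1,…,n. Then for every integer k ≥ 2, depth(S̄/Ī^k) = 0; equivalently, n̄ is an associated prime of S̄/Ī^k. -/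
open MvPolynomial

noncomputable section

/-- The depth of a module `M` with respect to an ideal `J`: the supremum of the lengths of
`M`-regular sequences consisting of elements of `J`. -/
noncomputable def depthWrt {R : Type*} [CommRing R] (J : Ideal R)
    (M : Type*) [AddCommGroup M] [Module R M] : ℕ∞ :=
  sSup {k : ℕ∞ | ∃ rs : List R, (rs.length : ℕ∞) = k ∧ (∀ r ∈ rs, r ∈ J) ∧
    RingTheory.Sequence.IsRegular M rs}

variable (K : Type*) [Field K] (n : ℕ)

namespace DepthAux

/-- iterated sumset: sums of `k` elements of `E` -/
def sumsets {σ : Type*} (E : Set (σ →₀ ℕ)) : ℕ → Set (σ →₀ ℕ)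
  | 0 => {0}
  | k+1 => Set.image2 (· + ·) E (sumsets E k)

section Generic

variable {K : Type*} [Field K] {σ : Type*}

lemma X_eq (v : σ) : (X v : MvPolynomial σ K) = monomial (Finsupp.single v 1) 1 := rfl

lemma prod_monomial_one {ι : Type*} (s : Finset ι) (f : ι → (σ →₀ ℕ)) :
    ∏ i ∈ s, monomial (f i) (1 : K) = monomial (∑ i ∈ s, f i) 1 := by
  induction s using Finset.cons_induction with
  | empty => simp
  | cons a s ha ih => rw [Finset.prod_cons, ih, Finset.sum_cons, monomial_mul, one_mul]

lemma span_image_pow (E : Set (σ →₀ ℕ)) (k : ℕ) :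
    (Ideal.span ((fun d => monomial d (1 : K)) '' E)) ^ k
      = Ideal.span ((fun d => monomial d (1 : K)) '' sumsets E k) := by
  induction k with
  | zero =>
      simp only [pow_zero, sumsets, Set.image_singleton]
      rw [show (monomial (0 : σ →₀ ℕ) (1 : K)) = 1 from by simp, Ideal.span_singleton_one,
        Ideal.one_eq_top]
  | succ k ih =>
      rw [pow_succ', ih, Ideal.span_mul_span']
      congr 1
      rw [← Set.image2_mul, Set.image2_image_left, Set.image2_image_right]
      have h1 : (fun (a b : σ →₀ ℕ) => monomial a (1:K) * monomial b 1)
          = fun a b => monomial (a + b) 1 := by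
        funext a b; rw [monomial_mul, one_mul]
      rw [h1, show sumsets E (k+1) = Set.image2 (· + ·) E (sumsets E k) from rfl,
        Set.image_image2]

lemma mem_pow_iff (E : Set (σ →₀ ℕ)) (k : ℕ) (p : MvPolynomial σ K) :
    p ∈ (Ideal.span ((fun d => monomial d (1 : K)) '' E)) ^ k ↔
      ∀ m ∈ p.support, ∃ d ∈ sumsets E k, d ≤ m := by
  rw [span_image_pow, mem_ideal_span_monomial_image]

end Generic

abbrev va (n : ℕ) : VarsB n := Sum.inl 0
abbrev vb (n : ℕ) : VarsB n := Sum.inl 1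
abbrev vx {n : ℕ} (i : Fin n) : VarsB n := Sum.inr (Sum.inl i)
abbrev vy {n : ℕ} (i : Fin n) : VarsB n := Sum.inr (Sum.inr i)

/-- exponents of the generators of `Ī` -/
def gE (n : ℕ) : Set (VarsB n →₀ ℕ) :=
  ({Finsupp.single (va n) 6, Finsupp.single (va n) 5 + Finsupp.single (vb n) 1,
    Finsupp.single (va n) 1 + Finsupp.single (vb n) 5, Finsupp.single (vb n) 6} ∪
   Set.range (fun i : Fin n =>
     Finsupp.single (va n) 4 + Finsupp.single (vx i) 1 + Finsupp.single (vy i) 2) ∪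
   Set.range (fun i : Fin n =>
     Finsupp.single (vb n) 4 + Finsupp.single (vx i) 2 + Finsupp.single (vy i) 1))

/-- the exponent of `x₁y₁⋯xₙyₙ` -/
def Wn (n : ℕ) : VarsB n →₀ ℕ :=
  ∑ i : Fin n, (Finsupp.single (vx i) 1 + Finsupp.single (vy i) 1)

variable {n : ℕ}

@[simp] lemma Wn_apply_inl (t : Fin 2) : Wn n (Sum.inl t) = 0 := by
  simp [Wn, Finsupp.finset_sum_apply, Finsupp.single_apply]

@[simp] lemma Wn_apply_vx (i : Fin n) : Wn n (vx i) = 1 := by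
  simp [Wn, Finsupp.finset_sum_apply, Finsupp.single_apply]

@[simp] lemma Wn_apply_vy (i : Fin n) : Wn n (vy i) = 1 := by
  simp [Wn, Finsupp.finset_sum_apply, Finsupp.single_apply]

/-- key dichotomy for elements of the `k`-fold sumset of `gE` -/
lemma sumsets_dichotomy :
    ∀ k, ∀ d ∈ sumsets (gE n) k,
      (∃ i : Fin n, 2 ≤ d (vx i) ∨ 2 ≤ d (vy i)) ∨ d (va n) + d (vb n) = 6 * k := by
  intro k
  induction k with
  | zero =>
      rintro d hd
      rw [show sumsets (gE n) 0 = {0} from rfl, Set.mem_singleton_iff] at hd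
      subst hd; right; simp
  | succ k ih =>
      rintro d hd
      obtain ⟨g, hg, e, he, rfl⟩ := hd
      have hde : ∀ v, e v ≤ (g + e) v := fun v => by simp
      rcases hg with (hg | ⟨i, rfl⟩) | ⟨i, rfl⟩
      · have hgab : g (va n) + g (vb n) = 6 := by
          rcases hg with rfl | rfl | rfl | rfl <;> simp [Finsupp.single_apply]
        rcases ih e he with ⟨i, hi⟩ | hab
        · refine Or.inl ⟨i, ?_⟩
          rcases hi with hi | hi
          · exact Or.inl (le_trans hi (hde _))
          · exact Or.inr (le_trans hi (hde _))
        · right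
          simp only [Finsupp.add_apply]
          omega
      · left; exact ⟨i, Or.inr (by simp [Finsupp.single_apply])⟩
      · left; exact ⟨i, Or.inl (by simp [Finsupp.single_apply])⟩

lemma single_b_mem (m : ℕ) : Finsupp.single (vb n) (6*m) ∈ sumsets (gE n) m := by
  induction m with
  | zero => simp [sumsets]
  | succ m ih =>
      have h : Finsupp.single (vb n) (6*(m+1))
          = Finsupp.single (vb n) 6 + Finsupp.single (vb n) (6*m) := by
        rw [← Finsupp.single_add]; ring_nf
      rw [h]
      exact Set.mem_image2_of_mem (by simp [gE]) ih

/-- the exponent of `wMon` -/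
def wExp (n k : ℕ) : VarsB n →₀ ℕ :=
  Finsupp.single (va n) 5 + Finsupp.single (vb n) (6*k-6) + Wn n

@[simp] lemma wExp_apply_va (k : ℕ) : wExp n k (va n) = 5 := by
  simp [wExp, Finsupp.single_apply]

@[simp] lemma wExp_apply_vb (k : ℕ) : wExp n k (vb n) = 6*k-6 := by
  simp [wExp, Finsupp.single_apply]

@[simp] lemma wExp_apply_vx (k : ℕ) (i : Fin n) : wExp n k (vx i) = 1 := by
  simp [wExp, Finsupp.single_apply]

@[simp] lemma wExp_apply_vy (k : ℕ) (i : Fin n) : wExp n k (vy i) = 1 := by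
  simp [wExp, Finsupp.single_apply]

end DepthAux

namespace DepthAux

open DepthAux

variable {K : Type*} [Field K] {n : ℕ}

lemma hE_image : idealIbar K n = Ideal.span ((fun d => monomial d (1:K)) '' gE n) := by
  have e1 : monomial (Finsupp.single (va n) 6) (1:K) = ba K n ^ 6 := by
    rw [ba, X_pow_eq_monomial]
  have e2 : monomial (Finsupp.single (va n) 5 + Finsupp.single (vb n) 1) (1:K)
      = ba K n ^ 5 * bb K n := by
    rw [ba, bb, X_pow_eq_monomial, X_eq, monomial_mul, one_mul]
  have e3 : monomial (Finsupp.single (va n) 1 + Finsupp.single (vb n) 5) (1:K)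
      = ba K n * bb K n ^ 5 := by
    rw [ba, bb, X_pow_eq_monomial, X_eq, monomial_mul, one_mul]
  have e4 : monomial (Finsupp.single (vb n) 6) (1:K) = bb K n ^ 6 := by
    rw [bb, X_pow_eq_monomial]
  have e5 : ∀ i : Fin n,
      monomial (Finsupp.single (va n) 4 + Finsupp.single (vx i) 1 + Finsupp.single (vy i) 2) (1:K)
        = ba K n ^ 4 * bx K n i * by' K n i ^ 2 := fun i => by
    rw [ba, bx, by', X_pow_eq_monomial, X_pow_eq_monomial, X_eq, monomial_mul, monomial_mul]
    ring_nf
  have e6 : ∀ i : Fin n,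
      monomial (Finsupp.single (vb n) 4 + Finsupp.single (vx i) 2 + Finsupp.single (vy i) 1) (1:K)
        = bb K n ^ 4 * bx K n i ^ 2 * by' K n i := fun i => by
    rw [bb, bx, by', X_pow_eq_monomial, X_pow_eq_monomial, X_eq, monomial_mul, monomial_mul]
    ring_nf
  have r5 : (fun d => monomial d (1:K)) '' Set.range (fun i : Fin n =>
      Finsupp.single (va n) 4 + Finsupp.single (vx i) 1 + Finsupp.single (vy i) 2)
      = Set.range (fun i : Fin n => ba K n ^ 4 * bx K n i * by' K n i ^ 2) := by
    rw [← Set.range_comp]; exact congrArg Set.range (funext fun i => e5 i)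
  have r6 : (fun d => monomial d (1:K)) '' Set.range (fun i : Fin n =>
      Finsupp.single (vb n) 4 + Finsupp.single (vx i) 2 + Finsupp.single (vy i) 1)
      = Set.range (fun i : Fin n => bb K n ^ 4 * bx K n i ^ 2 * by' K n i) := by
    rw [← Set.range_comp]; exact congrArg Set.range (funext fun i => e6 i)
  rw [idealIbar, gE, Set.image_union, Set.image_union, r5, r6, Set.image_insert_eq,
    Set.image_insert_eq, Set.image_insert_eq, Set.image_singleton, e1, e2, e3, e4]

lemma wMon_eq (k : ℕ) : wMon K n k = monomial (wExp n k) 1 := by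
  have h : ∏ i : Fin n, (bx K n i * by' K n i) = monomial (Wn n) (1:K) := by
    rw [Wn, ← prod_monomial_one]
    exact Finset.prod_congr rfl fun i _ => by
      rw [bx, by', X_eq, X_eq, monomial_mul, one_mul]
  rw [wMon, ba, bb, X_pow_eq_monomial, X_pow_eq_monomial, h, monomial_mul, monomial_mul,
    one_mul, one_mul, wExp]

lemma wMon_not_mem (k : ℕ) (hk : 1 ≤ k) : wMon K n k ∉ (idealIbar K n)^k := by
  classical
  rw [hE_image, mem_pow_iff, wMon_eq]
  intro h
  obtain ⟨d, hd, hle⟩ := h (wExp n k) (by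
    rw [support_monomial, if_neg one_ne_zero]; exact Finset.mem_singleton_self _)
  rw [Finsupp.le_def] at hle
  rcases sumsets_dichotomy k d hd with ⟨i, hi⟩ | hab
  · have h1 := hle (vx i)
    have h2 := hle (vy i)
    simp only [wExp_apply_vx, wExp_apply_vy] at h1 h2
    omega
  · have h1 := hle (va n)
    have h2 := hle (vb n)
    simp only [wExp_apply_va, wExp_apply_vb] at h1 h2
    omega

lemma X_mul_wMon_mem (k : ℕ) (hk : 2 ≤ k) (v : VarsB n) :
    X v * wMon K n k ∈ (idealIbar K n)^k := by
  classical
  obtain ⟨m, rfl⟩ : ∃ m, k = m + 2 := ⟨k - 2, by omega⟩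
  rw [hE_image, mem_pow_iff, wMon_eq, X_eq, monomial_mul, one_mul]
  intro mm hmm
  rw [support_monomial, if_neg one_ne_zero, Finset.mem_singleton] at hmm
  subst hmm
  rcases v with t | i | i
  · fin_cases t
    · refine ⟨Finsupp.single (va n) 6 + Finsupp.single (vb n) (6*(m+1)),
        Set.mem_image2_of_mem (by simp [gE]) (single_b_mem _), ?_⟩
      rw [Finsupp.le_def]
      intro u
      rcases u with t' | i' | i'
      · fin_cases t' <;>
          simp [wExp, Finsupp.add_apply, Finsupp.single_apply] <;> try omega
      · simp [wExp, Finsupp.add_apply, Finsupp.single_apply]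
      · simp [wExp, Finsupp.add_apply, Finsupp.single_apply]
    · refine ⟨(Finsupp.single (va n) 5 + Finsupp.single (vb n) 1)
          + Finsupp.single (vb n) (6*(m+1)),
        Set.mem_image2_of_mem (by simp [gE]) (single_b_mem _), ?_⟩
      rw [Finsupp.le_def]
      intro u
      rcases u with t' | i' | i'
      · fin_cases t' <;>
          simp [wExp, Finsupp.add_apply, Finsupp.single_apply] <;> try omega
      · simp [wExp, Finsupp.add_apply, Finsupp.single_apply]
      · simp [wExp, Finsupp.add_apply, Finsupp.single_apply]
  · refine ⟨(Finsupp.single (vb n) 4 + Finsupp.single (vx i) 2 + Finsupp.single (vy i) 1)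
        + ((Finsupp.single (va n) 5 + Finsupp.single (vb n) 1)
            + Finsupp.single (vb n) (6*m)),
      Set.mem_image2_of_mem (by simp [gE])
        (Set.mem_image2_of_mem (by simp [gE]) (single_b_mem m)), ?_⟩
    rw [Finsupp.le_def]
    intro u
    rcases u with t' | i' | i'
    · fin_cases t' <;>
        simp [wExp, Finsupp.add_apply, Finsupp.single_apply] <;> try omega
    · simp only [wExp, Finsupp.add_apply, Finsupp.single_apply]
      simp only [Wn_apply_vx]
      split_ifs <;> simp_all <;> try omega
    · simp only [wExp, Finsupp.add_apply, Finsupp.single_apply]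
      simp only [Wn_apply_vy]
      split_ifs <;> simp_all <;> try omega
  · refine ⟨(Finsupp.single (va n) 4 + Finsupp.single (vx i) 1 + Finsupp.single (vy i) 2)
        + ((Finsupp.single (va n) 1 + Finsupp.single (vb n) 5)
            + Finsupp.single (vb n) (6*m)),
      Set.mem_image2_of_mem (by simp [gE])
        (Set.mem_image2_of_mem (by simp [gE]) (single_b_mem m)), ?_⟩
    rw [Finsupp.le_def]
    intro u
    rcases u with t' | i' | i'
    · fin_cases t' <;>
        simp [wExp, Finsupp.add_apply, Finsupp.single_apply] <;> try omega
    · simp only [wExp, Finsupp.add_apply, Finsupp.single_apply]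
      simp only [Wn_apply_vx]
      split_ifs <;> simp_all <;> try omega
    · simp only [wExp, Finsupp.add_apply, Finsupp.single_apply]
      simp only [Wn_apply_vy]
      split_ifs <;> simp_all <;> try omega

lemma nBar_isMaximal : (nBar K n).IsMaximal := by
  have h : nBar K n = RingHom.ker (constantCoeff : MvPolynomial (VarsB n) K →+* K) := by
    ext p
    rw [nBar, ← Set.image_univ, mem_ideal_span_X_image, RingHom.mem_ker]
    constructor
    · intro h
      by_contra h0
      have hmem : (0 : VarsB n →₀ ℕ) ∈ p.support := by
        rw [mem_support_iff]; exact h0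
      obtain ⟨i, _, hi⟩ := h 0 hmem
      exact hi rfl
    · intro h0 m hm
      by_contra hc
      push_neg at hc
      have : m = 0 := Finsupp.ext fun i => hc i (Set.mem_univ i)
      rw [this, mem_support_iff] at hm
      exact hm h0
  rw [h]
  exact RingHom.ker_isMaximal_of_surjective _ (fun x => ⟨C x, constantCoeff_C _ x⟩)

end DepthAux

/-- For every `k ≥ 2`, `depth(S̄/Īᵏ) = 0`; equivalently, `n̄` is an associated prime
of `S̄/Īᵏ`. -/
theorem depth_bar_eq_zero (k : ℕ) (hk : 2 ≤ k) :
    depthWrt (nBar K n) (MvPolynomial (VarsB n) K ⧸ (idealIbar K n) ^ k) = 0 ∧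
    nBar K n ∈ associatedPrimes (MvPolynomial (VarsB n) K)
      (MvPolynomial (VarsB n) K ⧸ (idealIbar K n) ^ k) := by
  classical
  set w : MvPolynomial (VarsB n) K := wMon K n k with hw
  set wq : MvPolynomial (VarsB n) K ⧸ (idealIbar K n)^k := Ideal.Quotient.mk _ w with hwqdef
  have hwq : wq ≠ 0 := by
    rw [hwqdef, Ne, Ideal.Quotient.eq_zero_iff_mem]
    exact DepthAux.wMon_not_mem k (by omega)
  have hXmul : ∀ v : VarsB n, (X v : MvPolynomial (VarsB n) K) • wq = 0 := fun v => by
    have h : (X v : MvPolynomial (VarsB n) K) • wq = Ideal.Quotient.mk ((idealIbar K n)^k) (X v * w) := by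
      rw [hwqdef, ← smul_eq_mul]
      exact (Submodule.Quotient.mk_smul _ _ _).symm
    rw [h, Ideal.Quotient.eq_zero_iff_mem]
    exact DepthAux.X_mul_wMon_mem k hk v
  have hsub : nBar K n ≤ ((MvPolynomial (VarsB n) K) ∙ wq).annihilator := by
    rw [nBar, Ideal.span_le]
    rintro _ ⟨v, rfl⟩
    rw [SetLike.mem_coe, Submodule.mem_annihilator_span_singleton]
    exact hXmul v
  have hne : ((MvPolynomial (VarsB n) K) ∙ wq).annihilator ≠ ⊤ := by
    intro h
    have h1 := (Ideal.eq_top_iff_one _).mp h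
    rw [Submodule.mem_annihilator_span_singleton, one_smul] at h1
    exact hwq h1
  have hmax := DepthAux.nBar_isMaximal (K := K) (n := n)
  have hann : nBar K n = ((MvPolynomial (VarsB n) K) ∙ wq).annihilator :=
    hmax.eq_of_le hne hsub
  have hzero : ∀ r ∈ nBar K n, r • wq = 0 := fun r hr =>
    (Submodule.mem_annihilator_span_singleton _ _).mp (hann ▸ hr)
  haveI : Nontrivial (MvPolynomial (VarsB n) K ⧸ (idealIbar K n)^k) :=
    nontrivial_of_ne wq 0 hwq
  constructor
  · rw [depthWrt]
    have hset : {k' : ℕ∞ | ∃ rs : List (MvPolynomial (VarsB n) K), (rs.length : ℕ∞) = k' ∧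
        (∀ r ∈ rs, r ∈ nBar K n) ∧
        RingTheory.Sequence.IsRegular (MvPolynomial (VarsB n) K ⧸ (idealIbar K n)^k) rs}
        = {0} := by
      ext s
      simp only [Set.mem_setOf_eq, Set.mem_singleton_iff]
      constructor
      · rintro ⟨rs, hlen, hmem, hreg⟩
        cases rs with
        | nil => simpa using hlen.symm
        | cons r rs' =>
          exfalso
          have h1 := ((RingTheory.Sequence.isRegular_cons_iff _ r rs').mp hreg).1
          have h2 : r • wq = 0 := hzero r (hmem r List.mem_cons_self)
          exact hwq (h1 (show r • wq = r • 0 by rw [h2, smul_zero]))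
      · rintro rfl
        exact ⟨[], by simp, by simp, RingTheory.Sequence.IsRegular.nil _ _⟩
    rw [hset, sSup_singleton]
  · refine isAssociatedPrime_iff.mpr ⟨hmax.isPrime, wq, ?_⟩
    rw [hann]; ext r
    rw [Submodule.mem_annihilator_span_singleton, Submodule.mem_colon_singleton,
      Submodule.mem_bot]
end
end

section
/- The quotient of S/I^k by the ideal generated by the images of c and d is isomorphic (as a ring) to S̄/Ī^k, where S̄ = K[a,b,x_1,y_1,…,x_n,y_n] and Ī ⊂ S̄ is the monomial ideal generated by a^6, a^5b, ab^5, b^6, and a^4x_iy_i^2, b^4x_i^2y_i for i = 1,…,n. -/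
open MvPolynomial

noncomputable section

/-- The type of the `2n+4` variables `a, b, c, d, x₁, y₁, …, xₙ, yₙ`. -/
abbrev Vars (n : ℕ) : Type := Fin 4 ⊕ Fin n ⊕ Fin n

variable (K : Type*) [Field K] (n : ℕ)

/-- The variable `a`. -/
def va : MvPolynomial (Vars n) K := X (Sum.inl 0)
/-- The variable `b`. -/
def vb : MvPolynomial (Vars n) K := X (Sum.inl 1)
/-- The variable `c`. -/
def vc : MvPolynomial (Vars n) K := X (Sum.inl 2)
/-- The variable `d`. -/
def vd : MvPolynomial (Vars n) K := X (Sum.inl 3)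
/-- The variable `xᵢ` (for `i = 0, …, n-1` corresponding to `x₁, …, xₙ`). -/
def vx (i : Fin n) : MvPolynomial (Vars n) K := X (Sum.inr (Sum.inl i))
/-- The variable `yᵢ` (for `i = 0, …, n-1` corresponding to `y₁, …, yₙ`). -/
def vy (i : Fin n) : MvPolynomial (Vars n) K := X (Sum.inr (Sum.inr i))

/-- The monomial ideal
`I = (a⁶, a⁵b, ab⁵, b⁶, a⁴b⁴c, a⁴b⁴d, a⁴x₁y₁², b⁴x₁²y₁, …, a⁴xₙyₙ², b⁴xₙ²yₙ)`. -/
def idealI : Ideal (MvPolynomial (Vars n) K) :=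
  Ideal.span
    ({va K n ^ 6, va K n ^ 5 * vb K n, va K n * vb K n ^ 5, vb K n ^ 6,
      va K n ^ 4 * vb K n ^ 4 * vc K n, va K n ^ 4 * vb K n ^ 4 * vd K n} ∪
     Set.range (fun i => va K n ^ 4 * vx K n i * vy K n i ^ 2) ∪
     Set.range (fun i => vb K n ^ 4 * vx K n i ^ 2 * vy K n i))

/-- The graded maximal ideal `m = (a,b,c,d,x₁,y₁,…,xₙ,yₙ)`. -/
def mMax : Ideal (MvPolynomial (Vars n) K) := Ideal.span (Set.range X)

/-- Images of the variables under the forward substitution `c,d ↦ 0`. -/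
def gTo : Vars n → MvPolynomial (VarsB n) K
  | .inl ⟨0, _⟩ => ba K n
  | .inl ⟨1, _⟩ => bb K n
  | .inl ⟨2, _⟩ => 0
  | .inl ⟨3, _⟩ => 0
  | .inr (.inl i) => bx K n i
  | .inr (.inr i) => by' K n i

/-- Images of the variables under the canonical section `S̄ → S`. -/
def gFrom : VarsB n → MvPolynomial (Vars n) K
  | .inl ⟨0, _⟩ => va K n
  | .inl ⟨1, _⟩ => vb K n
  | .inr (.inl i) => vx K n i
  | .inr (.inr i) => vy K n i

/-- The forward substitution homomorphism. -/
def fwd : MvPolynomial (Vars n) K →ₐ[K] MvPolynomial (VarsB n) K := aeval (gTo K n)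

/-- The section homomorphism. -/
def bwd : MvPolynomial (VarsB n) K →ₐ[K] MvPolynomial (Vars n) K := aeval (gFrom K n)

lemma fwd_bwd (q : MvPolynomial (VarsB n) K) : fwd K n (bwd K n q) = q := by
  have h : (fwd K n).comp (bwd K n) = AlgHom.id K _ := by
    apply MvPolynomial.algHom_ext
    rintro (j | j | j)
    · fin_cases j <;>
        simp [fwd, bwd, gTo, gFrom, va, vb, ba, bb]
    · simp [fwd, bwd, gTo, gFrom, vx, bx]
    · simp [fwd, bwd, gTo, gFrom, vy, by']
  exact DFunLike.congr_fun h q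

lemma sub_mem_cd (p : MvPolynomial (Vars n) K) :
    p - bwd K n (fwd K n p) ∈ Ideal.span {vc K n, vd K n} := by
  induction p using MvPolynomial.induction_on with
  | C a => simp [fwd, bwd]
  | add p q hp hq =>
      have := Ideal.add_mem _ hp hq
      simpa [add_sub_add_comm] using this
  | mul_X p i hp =>
      rcases i with j | j
      · fin_cases j
        · have h : bwd K n (fwd K n (X (Sum.inl 0) : MvPolynomial (Vars n) K))
              = X (Sum.inl 0) := by simp [fwd, bwd, gTo, gFrom, ba, va]
          have : p * X (Sum.inl 0) - bwd K n (fwd K n (p * X (Sum.inl 0)))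
              = (p - bwd K n (fwd K n p)) * X (Sum.inl 0) := by
            rw [map_mul, map_mul, h]; ring
          show p * X (Sum.inl 0) - bwd K n (fwd K n (p * X (Sum.inl 0))) ∈
            Ideal.span {vc K n, vd K n}
          rw [this]; exact Ideal.mul_mem_right _ _ hp
        · have h : bwd K n (fwd K n (X (Sum.inl 1) : MvPolynomial (Vars n) K))
              = X (Sum.inl 1) := by simp [fwd, bwd, gTo, gFrom, bb, vb]
          have : p * X (Sum.inl 1) - bwd K n (fwd K n (p * X (Sum.inl 1)))
              = (p - bwd K n (fwd K n p)) * X (Sum.inl 1) := by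
            rw [map_mul, map_mul, h]; ring
          show p * X (Sum.inl 1) - bwd K n (fwd K n (p * X (Sum.inl 1))) ∈
            Ideal.span {vc K n, vd K n}
          rw [this]; exact Ideal.mul_mem_right _ _ hp
        · have h : fwd K n (X (Sum.inl 2) : MvPolynomial (Vars n) K) = 0 := by
            simp [fwd, gTo]
          have : p * X (Sum.inl 2) - bwd K n (fwd K n (p * X (Sum.inl 2)))
              = p * vc K n := by
            rw [map_mul, h, mul_zero, map_zero, sub_zero, vc]
          show p * X (Sum.inl 2) - bwd K n (fwd K n (p * X (Sum.inl 2))) ∈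
            Ideal.span {vc K n, vd K n}
          rw [this]
          exact Ideal.mul_mem_left _ _ (Ideal.subset_span (by simp))
        · have h : fwd K n (X (Sum.inl 3) : MvPolynomial (Vars n) K) = 0 := by
            simp [fwd, gTo]
          have : p * X (Sum.inl 3) - bwd K n (fwd K n (p * X (Sum.inl 3)))
              = p * vd K n := by
            rw [map_mul, h, mul_zero, map_zero, sub_zero, vd]
          show p * X (Sum.inl 3) - bwd K n (fwd K n (p * X (Sum.inl 3))) ∈
            Ideal.span {vc K n, vd K n}
          rw [this]
          exact Ideal.mul_mem_left _ _ (Ideal.subset_span (by simp))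
      · have h : bwd K n (fwd K n (X (Sum.inr j) : MvPolynomial (Vars n) K))
            = X (Sum.inr j) := by
          rcases j with j | j <;> simp [fwd, bwd, gTo, gFrom, bx, vx, by', vy]
        have : p * X (Sum.inr j) - bwd K n (fwd K n (p * X (Sum.inr j)))
            = (p - bwd K n (fwd K n p)) * X (Sum.inr j) := by
          rw [map_mul, map_mul, h]; ring
        rw [this]; exact Ideal.mul_mem_right _ _ hp

lemma map_fwd_idealI : Ideal.map (fwd K n) (idealI K n) ≤ idealIbar K n := by
  rw [idealI, Ideal.map_span, Ideal.span_le]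
  rintro _ ⟨x, hx, rfl⟩
  simp only [Set.mem_union, Set.mem_insert_iff, Set.mem_singleton_iff, Set.mem_range] at hx
  have hva : fwd K n (va K n) = ba K n := by simp [fwd, gTo, va, ba]
  have hvb : fwd K n (vb K n) = bb K n := by simp [fwd, gTo, vb, bb]
  have hvc : fwd K n (vc K n) = 0 := by simp [fwd, gTo, vc]
  have hvd : fwd K n (vd K n) = 0 := by simp [fwd, gTo, vd]
  have hvx : ∀ i, fwd K n (vx K n i) = bx K n i := fun i => by simp [fwd, gTo, vx, bx]
  have hvy : ∀ i, fwd K n (vy K n i) = by' K n i := fun i => by simp [fwd, gTo, vy, by']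
  rcases hx with ((rfl | rfl | rfl | rfl | rfl | rfl) | ⟨i, rfl⟩) | ⟨i, rfl⟩
  · simp only [map_pow, hva]
    exact Ideal.subset_span (by simp)
  · simp only [map_mul, map_pow, hva, hvb]
    exact Ideal.subset_span (by simp)
  · simp only [map_mul, map_pow, hva, hvb]
    exact Ideal.subset_span (by simp)
  · simp only [map_pow, hvb]
    exact Ideal.subset_span (by simp)
  · simp only [map_mul, map_pow, hvc, mul_zero]
    exact Ideal.zero_mem _
  · simp only [map_mul, map_pow, hvd, mul_zero]
    exact Ideal.zero_mem _
  · simp only [map_mul, map_pow, hva, hvx, hvy]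
    exact Ideal.subset_span (by
      simp only [Set.mem_union, Set.mem_range]
      exact Or.inl (Or.inr ⟨i, rfl⟩))
  · simp only [map_mul, map_pow, hvb, hvx, hvy]
    exact Ideal.subset_span (by
      simp only [Set.mem_union, Set.mem_range]
      exact Or.inr ⟨i, rfl⟩)

lemma map_bwd_idealIbar : Ideal.map (bwd K n) (idealIbar K n) ≤ idealI K n := by
  rw [idealIbar, Ideal.map_span, Ideal.span_le]
  rintro _ ⟨x, hx, rfl⟩
  simp only [Set.mem_union, Set.mem_insert_iff, Set.mem_singleton_iff, Set.mem_range] at hx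
  have hba : bwd K n (ba K n) = va K n := by simp [bwd, gFrom, va, ba]
  have hbb : bwd K n (bb K n) = vb K n := by simp [bwd, gFrom, vb, bb]
  have hbx : ∀ i, bwd K n (bx K n i) = vx K n i := fun i => by simp [bwd, gFrom, vx, bx]
  have hby : ∀ i, bwd K n (by' K n i) = vy K n i := fun i => by simp [bwd, gFrom, vy, by']
  rcases hx with ((rfl | rfl | rfl | rfl) | ⟨i, rfl⟩) | ⟨i, rfl⟩ <;>
    simp only [map_mul, map_pow, hba, hbb, hbx, hby] <;>
    exact Ideal.subset_span (by
      simp only [Set.mem_union, Set.mem_insert_iff, Set.mem_singleton_iff, Set.mem_range]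
      simp only [true_or, or_true, exists_apply_eq_apply])

lemma ker_eq (k : ℕ) :
    (idealI K n) ^ k ⊔ Ideal.span {vc K n, vd K n}
      = RingHom.ker ((Ideal.Quotient.mk ((idealIbar K n) ^ k)).comp
          (fwd K n).toRingHom) := by
  rw [← RingHom.comap_ker, Ideal.mk_ker]
  apply le_antisymm
  · apply sup_le
    · rw [← Ideal.map_le_iff_le_comap, Ideal.map_pow]
      exact Ideal.pow_right_mono (map_fwd_idealI K n) k
    · rw [Ideal.span_le]
      have hc : (fwd K n).toRingHom (vc K n) = 0 := by simp [fwd, gTo, vc]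
      have hd : (fwd K n).toRingHom (vd K n) = 0 := by simp [fwd, gTo, vd]
      rintro x hx
      simp only [Set.mem_insert_iff, Set.mem_singleton_iff] at hx
      rcases hx with rfl | rfl <;>
        simp only [SetLike.mem_coe, Ideal.mem_comap, hc, hd] <;>
        exact Ideal.zero_mem _
  · intro p hp
    have hp' : fwd K n p ∈ (idealIbar K n) ^ k := hp
    have h1 : bwd K n (fwd K n p) ∈ (idealI K n) ^ k := by
      have hmem : bwd K n (fwd K n p) ∈ Ideal.map (bwd K n) ((idealIbar K n) ^ k) :=
        Ideal.mem_map_of_mem _ hp'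
      have hle : Ideal.map (bwd K n) ((idealIbar K n) ^ k) ≤ (idealI K n) ^ k := by
        rw [Ideal.map_pow]
        exact Ideal.pow_right_mono (map_bwd_idealIbar K n) k
      exact hle hmem
    have hdec : p = bwd K n (fwd K n p) + (p - bwd K n (fwd K n p)) := by ring
    rw [hdec]
    exact Ideal.add_mem _ (Ideal.mem_sup_left h1)
      (Ideal.mem_sup_right (sub_mem_cd K n p))

lemma fwd_surjective : Function.Surjective
    ((Ideal.Quotient.mk ((idealIbar K n) ^ k)).comp (fwd K n).toRingHom) := by
  intro q
  obtain ⟨r, rfl⟩ := Ideal.Quotient.mk_surjective q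
  exact ⟨bwd K n r, by simp [fwd_bwd]⟩

/-- The quotient of `S/Iᵏ` by the ideal generated by the images of `c` and `d` is
isomorphic as a ring to `S̄/Īᵏ`. -/
theorem quotient_cd_iso (k : ℕ) (hk : 1 ≤ k) :
    Nonempty
      (((MvPolynomial (Vars n) K ⧸ (idealI K n) ^ k) ⧸
          Ideal.span {Ideal.Quotient.mk ((idealI K n) ^ k) (vc K n),
            Ideal.Quotient.mk ((idealI K n) ^ k) (vd K n)}) ≃+*
        (MvPolynomial (VarsB n) K ⧸ (idealIbar K n) ^ k)) := by
  have hspan : Ideal.span {Ideal.Quotient.mk ((idealI K n) ^ k) (vc K n),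
        Ideal.Quotient.mk ((idealI K n) ^ k) (vd K n)}
      = Ideal.map (Ideal.Quotient.mk ((idealI K n) ^ k))
          (Ideal.span {vc K n, vd K n}) := by
    rw [Ideal.map_span, Set.image_insert_eq, Set.image_singleton]
  refine ⟨((Ideal.quotEquivOfEq hspan).trans
    (DoubleQuot.quotQuotEquivQuotSup ((idealI K n) ^ k)
      (Ideal.span {vc K n, vd K n}))).trans
    ((Ideal.quotEquivOfEq (ker_eq K n k)).trans
      (RingHom.quotientKerEquivOfSurjective (fwd_surjective K n)))⟩
end
end
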